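/- arXiv:2605.02070 — 2 statements merged into one kernel-verified Lean document; each statement's English description precedes it below -/
import Mathlib

section
/- There exists an absolute constant C₀ > 0 such that for every M > 0 and all probability measures G, H supported on [−M, M], Regret(H‖G) ≤ C₀ M² δ + C₀ Δ, where δ := 2 ∫_ℝ (f_G − f_H)²/(f_G + f_H) dy and Δ := 2 ∫_ℝ (m_G f_G − m_H f_H)²/(f_G + f_H) dy. -/
open MeasureTheory Real Filter

/-- The standard normal density. -/
noncomputable def gauss (y : ℝ) : ℝ := (Real.sqrt (2 * Real.pi))⁻¹ * Real.exp (-(y ^ 2) / 2)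

/-- The Gaussian mixture density `f_G`. -/
noncomputable def mixDens (G : Measure ℝ) (y : ℝ) : ℝ := ∫ u, gauss (y - u) ∂G

/-- The regret `Regret(H‖G)`. -/
noncomputable def regret (H G : Measure ℝ) : ℝ :=
  ∫ y, (deriv (mixDens G) y / mixDens G y - deriv (mixDens H) y / mixDens H y) ^ 2 * mixDens G y

/-- The squared Hellinger distance between `f_G` and `f_H`. -/
noncomputable def hellingerSq (G H : Measure ℝ) : ℝ :=
  ∫ y, (Real.sqrt (mixDens G y) - Real.sqrt (mixDens H y)) ^ 2

/-- The posterior mean (Tweedie's formula) for prior `G`. -/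
noncomputable def postMean (G : Measure ℝ) (y : ℝ) : ℝ :=
  y + deriv (mixDens G) y / mixDens G y

lemma gauss_pos (y : ℝ) : 0 < gauss y := by
  have : 0 < Real.sqrt (2 * Real.pi) := Real.sqrt_pos.2 (by positivity)
  exact mul_pos (inv_pos.2 this) (Real.exp_pos _)

lemma continuous_gauss : Continuous gauss := by
  unfold gauss; fun_prop

lemma gauss_le (y : ℝ) : gauss y ≤ (Real.sqrt (2 * Real.pi))⁻¹ := by
  have h : Real.exp (-(y ^ 2) / 2) ≤ 1 := Real.exp_le_one_iff.2 (by nlinarith [sq_nonneg y])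
  have hc : (0:ℝ) < (Real.sqrt (2 * Real.pi))⁻¹ := by positivity
  unfold gauss
  nlinarith

lemma hasDerivAt_gauss (y : ℝ) : HasDerivAt gauss (-y * gauss y) y := by
  have h1 : HasDerivAt (fun t : ℝ => -(t ^ 2) / 2) (-y) y := by
    have := ((hasDerivAt_pow 2 y).neg).div_const 2
    simpa using this.congr_deriv (by ring)
  have h2 := (h1.exp).const_mul (Real.sqrt (2 * Real.pi))⁻¹
  unfold gauss
  exact h2.congr_deriv (by ring)

lemma abs_mul_gauss_le (y : ℝ) : |y| * gauss y ≤ (Real.sqrt (2 * Real.pi))⁻¹ := by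
  have h1 : |y| ≤ Real.exp (y ^ 2 / 2) := by
    have := Real.add_one_le_exp (y ^ 2 / 2)
    nlinarith [sq_nonneg (|y| - 1), sq_abs y]
  have h2 : |y| * Real.exp (-(y ^ 2) / 2) ≤ 1 := by
    have he : Real.exp (-(y ^ 2) / 2) = (Real.exp (y ^ 2 / 2))⁻¹ := by
      rw [← Real.exp_neg]; ring_nf
    rw [he]
    rw [mul_inv_le_iff₀ (Real.exp_pos _), one_mul]
    exact h1
  have hc : (0:ℝ) < (Real.sqrt (2 * Real.pi))⁻¹ := by positivity
  unfold gauss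
  calc |y| * ((Real.sqrt (2 * Real.pi))⁻¹ * Real.exp (-(y ^ 2) / 2))
      = (Real.sqrt (2 * Real.pi))⁻¹ * (|y| * Real.exp (-(y ^ 2) / 2)) := by ring
    _ ≤ (Real.sqrt (2 * Real.pi))⁻¹ * 1 := by nlinarith
    _ = _ := mul_one _


section
variable (G : Measure ℝ) [IsProbabilityMeasure G]


lemma integrable_gauss_shift (y : ℝ) : Integrable (fun u => gauss (y - u)) G := by
  refine Integrable.mono' (integrable_const ((Real.sqrt (2 * Real.pi))⁻¹)) ?_ ?_
  · exact (continuous_gauss.comp (continuous_const.sub continuous_id)).aestronglyMeasurable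
  · exact Eventually.of_forall fun u => by
      rw [Real.norm_eq_abs, abs_of_pos (gauss_pos _)]; exact gauss_le _

lemma mixDens_pos (y : ℝ) : 0 < mixDens G y := by
  rw [mixDens, integral_pos_iff_support_of_nonneg (fun u => (gauss_pos (y - u)).le)
    (integrable_gauss_shift G y)]
  have hs : (Function.support fun u => gauss (y - u)) = Set.univ :=
    Set.eq_univ_of_forall fun u => (gauss_pos _).ne'
  rw [hs]
  simp

lemma hasDerivAt_mixDens (y : ℝ) :
    HasDerivAt (mixDens G) (∫ u, (u - y) * gauss (y - u) ∂G) y := by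
  have key := hasDerivAt_integral_of_dominated_loc_of_deriv_le
    (F := fun (x : ℝ) (u : ℝ) => gauss (x - u))
    (F' := fun (x : ℝ) (u : ℝ) => (u - x) * gauss (x - u))
    (bound := fun _ => (Real.sqrt (2 * Real.pi))⁻¹)
    (μ := G) (x₀ := y) (Metric.ball_mem_nhds y one_pos)
    (Eventually.of_forall fun x =>
      (continuous_gauss.comp (continuous_const.sub continuous_id)).aestronglyMeasurable)
    (integrable_gauss_shift G y)
    (((continuous_id.sub continuous_const).mul
      (continuous_gauss.comp (continuous_const.sub continuous_id))).aestronglyMeasurable)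
    (Eventually.of_forall fun u x _ => by
      rw [Real.norm_eq_abs, abs_mul, abs_of_pos (gauss_pos _)]
      have := abs_mul_gauss_le (x - u)
      rwa [abs_sub_comm] at this)
    (integrable_const _)
    (Eventually.of_forall fun u x _ => by
      have h := (hasDerivAt_gauss (x - u)).comp x ((hasDerivAt_id x).sub_const u)
      simpa [mul_comm, Function.comp_def] using h.congr_deriv (by ring))
  exact key.2

lemma continuous_mixDens : Continuous (mixDens G) :=
  continuous_iff_continuousAt.2 fun y => (hasDerivAt_mixDens G y).continuousAt

lemma integrable_deriv_kernel (y : ℝ) :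
    Integrable (fun u => (u - y) * gauss (y - u)) G := by
  refine Integrable.mono' (integrable_const ((Real.sqrt (2 * Real.pi))⁻¹)) ?_ ?_
  · exact ((continuous_id.sub continuous_const).mul
      (continuous_gauss.comp (continuous_const.sub continuous_id))).aestronglyMeasurable
  · refine Eventually.of_forall fun u => ?_
    rw [Real.norm_eq_abs, abs_mul, abs_of_pos (gauss_pos _)]
    have := abs_mul_gauss_le (y - u)
    rwa [abs_sub_comm] at this

variable {M : ℝ}

lemma ae_mem_Icc (hsupp : G (Set.Icc (-M) M)ᶜ = 0) : ∀ᵐ u ∂G, u ∈ Set.Icc (-M) M := by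
  rw [ae_iff]
  have : {a : ℝ | ¬ a ∈ Set.Icc (-M) M} = (Set.Icc (-M) M)ᶜ := rfl
  rw [this]; exact hsupp

lemma abs_postMean_le (hM : 0 < M) (hsupp : G (Set.Icc (-M) M)ᶜ = 0) (y : ℝ) :
    |postMean G y| ≤ M := by
  have ha := mixDens_pos G y
  have hd : deriv (mixDens G) y = ∫ u, (u - y) * gauss (y - u) ∂G :=
    (hasDerivAt_mixDens G y).deriv
  have hintu : Integrable (fun u => u * gauss (y - u)) G := by
    have := (integrable_deriv_kernel G y).add ((integrable_gauss_shift G y).const_mul y)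
    refine this.congr (Eventually.of_forall fun u => ?_)
    simp only [Pi.add_apply]
    ring
  have h1 : (∫ u, (u - y) * gauss (y - u) ∂G) + y * mixDens G y
      = ∫ u, u * gauss (y - u) ∂G := by
    rw [mixDens, ← integral_const_mul,
      ← integral_add (integrable_deriv_kernel G y) ((integrable_gauss_shift G y).const_mul y)]
    exact integral_congr_ae (Eventually.of_forall fun u => by ring)
  have key : |(∫ u, (u - y) * gauss (y - u) ∂G) + y * mixDens G y| ≤ M * mixDens G y := by
    rw [h1]
    calc |∫ u, u * gauss (y - u) ∂G| ≤ ∫ u, |u * gauss (y - u)| ∂G :=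
          by simpa [Real.norm_eq_abs, abs_mul] using
            norm_integral_le_integral_norm (μ := G) (fun u => u * gauss (y - u))
      _ ≤ ∫ u, M * gauss (y - u) ∂G := by
          refine integral_mono_ae hintu.abs ((integrable_gauss_shift G y).const_mul M) ?_
          filter_upwards [ae_mem_Icc G hsupp] with u hu
          rw [abs_mul, abs_of_pos (gauss_pos _)]
          have : |u| ≤ M := abs_le.2 ⟨hu.1, hu.2⟩
          nlinarith [gauss_pos (y - u)]
      _ = M * mixDens G y := by rw [integral_const_mul, mixDens]
  have heq : postMean G y = ((∫ u, (u - y) * gauss (y - u) ∂G) + y * mixDens G y)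
      / mixDens G y := by
    rw [postMean, hd]
    field_simp
    ring
  rw [heq, abs_div, abs_of_pos ha, div_le_iff₀ ha]
  exact key

lemma mixDens_le_bnd (hM : 0 < M) (hsupp : G (Set.Icc (-M) M)ᶜ = 0) (y : ℝ) :
    mixDens G y ≤ (Real.sqrt (2 * Real.pi))⁻¹ * Real.exp (M ^ 2) * Real.exp (-(1/4) * y ^ 2) := by
  rw [mixDens]
  have hc : (0:ℝ) < (Real.sqrt (2 * Real.pi))⁻¹ := by positivity
  calc ∫ u, gauss (y - u) ∂G
      ≤ ∫ _u, (Real.sqrt (2 * Real.pi))⁻¹ * Real.exp (M ^ 2) * Real.exp (-(1/4) * y ^ 2) ∂G := by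
        refine integral_mono_ae (integrable_gauss_shift G y) (integrable_const _) ?_
        filter_upwards [ae_mem_Icc G hsupp] with u hu
        have hu' : |u| ≤ M := abs_le.2 ⟨hu.1, hu.2⟩
        have hexp : Real.exp (-((y - u) ^ 2) / 2) ≤ Real.exp (M ^ 2) * Real.exp (-(1/4) * y ^ 2) := by
          rw [← Real.exp_add]
          refine Real.exp_le_exp.2 ?_
          have hyu : y * u ≤ |y| * M := by
            calc y * u ≤ |y * u| := le_abs_self _
              _ = |y| * |u| := abs_mul y u
              _ ≤ |y| * M := mul_le_mul_of_nonneg_left hu' (abs_nonneg y)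
          have hAM : |y| * M ≤ y ^ 2 / 4 + M ^ 2 := by
            nlinarith [sq_nonneg (|y| - 2 * M), sq_abs y]
          nlinarith [sq_nonneg u]
        unfold gauss
        nlinarith [Real.exp_pos (-((y - u) ^ 2) / 2)]
    _ = (Real.sqrt (2 * Real.pi))⁻¹ * Real.exp (M ^ 2) * Real.exp (-(1/4) * y ^ 2) := by
        simp

lemma integrable_mixDens (hM : 0 < M) (hsupp : G (Set.Icc (-M) M)ᶜ = 0) :
    Integrable (mixDens G) := by
  refine Integrable.mono'
    (((integrable_exp_neg_mul_sq (by norm_num : (0:ℝ) < 1/4)).const_mul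
      ((Real.sqrt (2 * Real.pi))⁻¹ * Real.exp (M ^ 2)))) 
    (continuous_mixDens G).aestronglyMeasurable
    (Eventually.of_forall fun y => ?_)
  rw [Real.norm_eq_abs, abs_of_pos (mixDens_pos G y)]
  exact mixDens_le_bnd G hM hsupp y

end

lemma key_ineq {M a b m n : ℝ} (ha : 0 < a) (hb : 0 < b) (hm : |m| ≤ M) (hn : |n| ≤ M) :
    (m - n) ^ 2 * a ≤
      4 * M ^ 2 * ((a - b) ^ 2 / (a + b)) + 4 * ((m * a - n * b) ^ 2 / (a + b)) := by
  have hab : 0 < a + b := by linarith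
  have hco : 4 * M ^ 2 * ((a - b) ^ 2 / (a + b)) + 4 * ((m * a - n * b) ^ 2 / (a + b))
      = (4 * M ^ 2 * (a - b) ^ 2 + 4 * (m * a - n * b) ^ 2) / (a + b) := by ring
  rw [hco, le_div_iff₀ hab]
  have hm2 : m ^ 2 ≤ M ^ 2 := by nlinarith [sq_abs m, abs_nonneg m]
  have hn2 : n ^ 2 ≤ M ^ 2 := by nlinarith [sq_abs n, abs_nonneg n]
  rcases le_total a b with h | h
  · have h1 : (m - n) ^ 2 * b ^ 2 ≤ 2 * (m * a - n * b) ^ 2 + 2 * M ^ 2 * (b - a) ^ 2 := by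
      nlinarith [sq_nonneg ((m * a - n * b) - m * (b - a)), sq_nonneg (b - a)]
    have h2 : (m - n) ^ 2 * a * (a + b) ≤ 2 * ((m - n) ^ 2 * b ^ 2) := by
      have hab2 : a * (a + b) ≤ 2 * b ^ 2 := by nlinarith
      nlinarith [mul_le_mul_of_nonneg_left hab2 (sq_nonneg (m - n))]
    nlinarith [h1, h2]
  · have h1 : (m - n) ^ 2 * a ^ 2 ≤ 2 * (m * a - n * b) ^ 2 + 2 * M ^ 2 * (a - b) ^ 2 := by
      nlinarith [sq_nonneg ((m * a - n * b) + n * (a - b)), sq_nonneg (a - b)]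
    have h2 : (m - n) ^ 2 * a * (a + b) ≤ 2 * ((m - n) ^ 2 * a ^ 2) := by
      have hab2 : a * (a + b) ≤ 2 * a ^ 2 := by nlinarith
      nlinarith [mul_le_mul_of_nonneg_left hab2 (sq_nonneg (m - n))]
    nlinarith [h1, h2]

theorem regret_reduction :
    ∃ C₀ : ℝ, 0 < C₀ ∧
      ∀ (M : ℝ), 0 < M →
        ∀ (G H : Measure ℝ), IsProbabilityMeasure G → IsProbabilityMeasure H →
          G (Set.Icc (-M) M)ᶜ = 0 → H (Set.Icc (-M) M)ᶜ = 0 →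
          regret H G ≤
            C₀ * M ^ 2 *
              (2 * ∫ y, (mixDens G y - mixDens H y) ^ 2 / (mixDens G y + mixDens H y)) +
            C₀ *
              (2 * ∫ y, (postMean G y * mixDens G y - postMean H y * mixDens H y) ^ 2 /
                (mixDens G y + mixDens H y)) := by
  refine ⟨2, two_pos, fun M hM G H hG hH hGsupp hHsupp => ?_⟩
  set a := mixDens G with ha_def
  set b := mixDens H with hb_def
  have hap : ∀ y, 0 < a y := mixDens_pos G
  have hbp : ∀ y, 0 < b y := mixDens_pos H
  have habp : ∀ y, 0 < a y + b y := fun y => by linarith [hap y, hbp y]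
  have hma : ∀ y, |postMean G y| ≤ M := abs_postMean_le G hM hGsupp
  have hmb : ∀ y, |postMean H y| ≤ M := abs_postMean_le H hM hHsupp
  have hia : Integrable a := integrable_mixDens G hM hGsupp
  have hib : Integrable b := integrable_mixDens H hM hHsupp
  -- measurability
  have hmeas_a : Measurable a := (continuous_mixDens G).measurable
  have hmeas_b : Measurable b := (continuous_mixDens H).measurable
  have hmeas_pa : Measurable (fun y => postMean G y * a y) := by
    have : Measurable (postMean G) :=
      (measurable_id.add ((measurable_deriv (mixDens G)).div hmeas_a))
    exact this.mul hmeas_a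
  have hmeas_pb : Measurable (fun y => postMean H y * b y) := by
    have : Measurable (postMean H) :=
      (measurable_id.add ((measurable_deriv (mixDens H)).div hmeas_b))
    exact this.mul hmeas_b
  set X : ℝ → ℝ := fun y => (a y - b y) ^ 2 / (a y + b y) with hX_def
  set Y : ℝ → ℝ := fun y => (postMean G y * a y - postMean H y * b y) ^ 2 / (a y + b y)
    with hY_def
  have hmeas_X : AEStronglyMeasurable X volume :=
    (((hmeas_a.sub hmeas_b).pow_const 2).div (hmeas_a.add hmeas_b)).aestronglyMeasurable
  have hmeas_Y : AEStronglyMeasurable Y volume :=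
    (((hmeas_pa.sub hmeas_pb).pow_const 2).div (hmeas_a.add hmeas_b)).aestronglyMeasurable
  have hiX : Integrable X := by
    refine Integrable.mono' (hia.add hib) hmeas_X (Eventually.of_forall fun y => ?_)
    have h1 : 0 ≤ X y := div_nonneg (sq_nonneg _) (habp y).le
    rw [Real.norm_eq_abs, abs_of_nonneg h1, hX_def, Pi.add_apply]
    rw [div_le_iff₀ (habp y)]
    nlinarith [hap y, hbp y, sq_nonneg (a y - b y)]
  have hiY : Integrable Y := by
    refine Integrable.mono' ((hia.add hib).const_mul (2 * M ^ 2))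
      hmeas_Y (Eventually.of_forall fun y => ?_)
    have h1 : 0 ≤ Y y := div_nonneg (sq_nonneg _) (habp y).le
    rw [Real.norm_eq_abs, abs_of_nonneg h1, hY_def, Pi.add_apply]
    rw [div_le_iff₀ (habp y)]
    have h2 : (postMean G y * a y) ^ 2 ≤ M ^ 2 * (a y) ^ 2 := by
      nlinarith [sq_abs (postMean G y), hma y, abs_nonneg (postMean G y), sq_nonneg (a y),
        mul_le_mul_of_nonneg_right
          (mul_self_le_mul_self (abs_nonneg (postMean G y)) (hma y)) (sq_nonneg (a y))]
    have h3 : (postMean H y * b y) ^ 2 ≤ M ^ 2 * (b y) ^ 2 := by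
      nlinarith [mul_le_mul_of_nonneg_right
          (mul_self_le_mul_self (abs_nonneg (postMean H y)) (hmb y)) (sq_nonneg (b y)),
        sq_abs (postMean H y)]
    nlinarith [sq_nonneg (postMean G y * a y + postMean H y * b y), hap y, hbp y,
      sq_nonneg (a y - b y)]
  -- pointwise bound
  have hpt : ∀ y,
      (deriv (mixDens G) y / a y - deriv (mixDens H) y / b y) ^ 2 * a y
        ≤ 4 * M ^ 2 * X y + 4 * Y y := by
    intro y
    have heq : deriv (mixDens G) y / a y - deriv (mixDens H) y / b y
        = postMean G y - postMean H y := by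
      rw [postMean, postMean]; ring
    rw [heq]
    exact key_ineq (hap y) (hbp y) (hma y) (hmb y)
  have hmono : regret H G ≤ ∫ y, (4 * M ^ 2 * X y + 4 * Y y) := by
    refine integral_mono_of_nonneg (Eventually.of_forall fun y => ?_)
      ((hiX.const_mul (4 * M ^ 2)).add (hiY.const_mul 4))
      (Eventually.of_forall fun y => hpt y)
    exact mul_nonneg (sq_nonneg _) (hap y).le
  have hsplit : ∫ y, (4 * M ^ 2 * X y + 4 * Y y)
      = 4 * M ^ 2 * (∫ y, X y) + 4 * (∫ y, Y y) := by
    rw [integral_add (hiX.const_mul (4 * M ^ 2)) (hiY.const_mul 4),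
      integral_const_mul, integral_const_mul]
  rw [hsplit] at hmono
  calc regret H G ≤ 4 * M ^ 2 * (∫ y, X y) + 4 * (∫ y, Y y) := hmono
    _ = 2 * M ^ 2 * (2 * ∫ y, X y) + 2 * (2 * ∫ y, Y y) := by ring
end

section
/- Let V : ℝ → ℝ be twice differentiable, let w := e^{−V}, and suppose that ∫_ℝ |y|^j w(y) dy < ∞ for every integer j ≥ 0, that |V'(y)| ≤ C₁(1 + |y|) for all y ∈ ℝ, and that V''(y) ≥ C₂ for all y ∈ ℝ, where C₁, C₂ > 0. Then there exists a constant C' > 0 depending only on C₁ and C₂ such that for every integer k ≥ 1 and every real polynomial p of degree at most k, ∫_ℝ y² p(y)² w(y) dy ≤ (C')² k ∫_ℝ p(y)² w(y) dy; that is, ‖y·p‖_{L²(w)} ≤ C' √k ‖p‖_{L²(w)}. -/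
/-!
Strong convexity gives `V y ≥ V 0 - C₁²/C₂ + C₂ y²/4` and the growth bound on `V'` gives
`V y ≤ V 0 + C₁/4 + 2 C₁ y²`, so `w` lies between two Gaussians whose prefactors differ by a factor
depending only on `C₁, C₂`. Where `y² ≤ γ k` the estimate is trivial. For `|y| ≥ √k`, Lagrange
interpolation at `k + 1` well-separated nodes of `[-√k, √k]`, each chosen where `p²` is at most its
local average, bounds `p(y)²` by `(k+1)³ (64 e² y² / k)^k ∫_{-√k}^{√k} p²`; the lower Gaussian
bound turns this integral into `e^{2 C₁ k}` times `∫ p² w` (up to the common prefactor). Once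
`y² ≥ γ k` with `γ` large, half of the Gaussian decay of `w` absorbs all these factors, and the
other half integrates to a constant.
-/

open MeasureTheory Real Filter Finset Nat

theorem ConvexOn.add_deriv_mul_sub_le {f : ℝ → ℝ} (hf : ConvexOn ℝ Set.univ f) {x : ℝ}
    (hfx : DifferentiableAt ℝ f x) (y : ℝ) : f x + deriv f x * (y - x) ≤ f y := by
  rcases lt_trichotomy x y with hxy | rfl | hyx
  · have h := hf.deriv_le_slope trivial trivial hxy hfx
    rw [slope_def_field, le_div_iff₀ (sub_pos.2 hxy)] at h
    linarith
  · simp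
  · have h := hf.slope_le_deriv trivial trivial hyx hfx
    rw [slope_def_field, div_le_iff₀ (sub_pos.2 hyx)] at h
    linarith

theorem add_deriv_mul_add_sq_le_of_le_deriv2 {V : ℝ → ℝ} {c : ℝ} (hV : Differentiable ℝ V)
    (hV' : Differentiable ℝ (deriv V)) (hV'' : ∀ y, c ≤ deriv (deriv V) y) (x y : ℝ) :
    V x + deriv V x * (y - x) + c / 2 * (y - x) ^ 2 ≤ V y := by
  set g : ℝ → ℝ := fun t => V t - c / 2 * t ^ 2
  have hg : ∀ t, HasDerivAt g (deriv V t - c * t) t := fun t =>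
    ((hV t).hasDerivAt.sub ((hasDerivAt_pow 2 t).const_mul (c / 2))).congr_deriv
      (by push_cast; ring)
  have hdg : deriv g = fun t => deriv V t - c * t := funext fun t => (hg t).deriv
  have hg' : ∀ t, HasDerivAt (deriv g) (deriv (deriv V) t - c) t := fun t => by
    rw [hdg]
    exact ((hV' t).hasDerivAt.sub ((hasDerivAt_id t).const_mul c)).congr_deriv (by ring)
  have hconv : ConvexOn ℝ Set.univ g :=
    convexOn_univ_of_deriv2_nonneg (fun t => (hg t).differentiableAt)
      (fun t => (hg' t).differentiableAt) fun t => by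
        rw [Function.iterate_succ_apply, Function.iterate_one, (hg' t).deriv]
        linarith [hV'' t]
  have h := hconv.add_deriv_mul_sub_le (hg x).differentiableAt y
  simp only [g, hdg] at h
  linarith

theorem add_sq_le_of_le_deriv2 {V : ℝ → ℝ} {C₁ C₂ : ℝ} (hC₂ : 0 < C₂) (hV : Differentiable ℝ V)
    (hV' : Differentiable ℝ (deriv V)) (hV'' : ∀ y, C₂ ≤ deriv (deriv V) y)
    (hV'0 : |deriv V 0| ≤ C₁) (y : ℝ) :
    V 0 - C₁ ^ 2 / C₂ + C₂ / 4 * y ^ 2 ≤ V y := by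
  have h := add_deriv_mul_add_sq_le_of_le_deriv2 hV hV' hV'' 0 y
  have hlin : -(C₁ * |y|) ≤ deriv V 0 * y := by
    rw [neg_le, ← neg_mul]
    exact (le_abs_self _).trans (by rw [abs_mul, abs_neg]; gcongr)
  have hamgm : C₁ * |y| ≤ C₁ ^ 2 / C₂ + C₂ / 4 * y ^ 2 := by
    rw [← sub_le_iff_le_add, le_div_iff₀ hC₂, ← sq_abs y]
    nlinarith [sq_nonneg (C₁ - C₂ * |y| / 2)]
  simp only [sub_zero] at h
  linarith

theorem le_add_sq_of_abs_deriv_le {V : ℝ → ℝ} {C : ℝ} (hV : Differentiable ℝ V)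
    (hV' : ∀ y, |deriv V y| ≤ C * (1 + |y|)) (y : ℝ) :
    V y ≤ V 0 + C / 4 + 2 * C * y ^ 2 := by
  have hC : 0 ≤ C := by simpa using (abs_nonneg _).trans (hV' 0)
  have hbound : ∀ x ∈ Set.Icc (-|y|) |y|, ‖deriv V x‖ ≤ C * (1 + |y|) := fun x hx => by
    have : |x| ≤ |y| := abs_le.2 hx
    exact (hV' x).trans (by gcongr)
  have hmvt := (convex_Icc (-|y|) |y|).norm_image_sub_le_of_norm_deriv_le
    (fun x _ => hV x) hbound ⟨by simp, abs_nonneg y⟩ ⟨neg_abs_le y, le_abs_self y⟩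
  simp only [Real.norm_eq_abs, sub_zero] at hmvt
  nlinarith [le_abs_self (V y - V 0), sq_abs y, sq_nonneg (|y| - 1 / 2)]

theorem Polynomial.integrable_eval_mul_of_moments {w : ℝ → ℝ}
    (hw : ∀ j : ℕ, Integrable (fun y => |y| ^ j * w y)) (q : Polynomial ℝ) :
    Integrable (fun y => q.eval y * w y) := by
  have hmon : ∀ j : ℕ, Integrable (fun y => y ^ j * w y) := fun j => by
    refine (hw j).norm.mono' ?_ (Eventually.of_forall fun y => by simp)
    exact (continuous_pow j).aestronglyMeasurable.mul (by simpa using (hw 0).1)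
  simp_rw [q.eval_eq_sum_range, Finset.sum_mul, mul_assoc]
  exact integrable_finsetSum _ fun j _ => (hmon j).const_mul _

theorem mul_setIntegral_le_integral_mul {X : Type*} [MeasurableSpace X] {μ : Measure X}
    {f w : X → ℝ} {s : Set X} {c : ℝ} (hs : MeasurableSet s) (hf : 0 ≤ f) (hw : 0 ≤ w)
    (hcw : ∀ x ∈ s, c ≤ w x) (hfs : IntegrableOn f s μ)
    (hfw : Integrable (fun x => f x * w x) μ) :
    c * ∫ x in s, f x ∂μ ≤ ∫ x, f x * w x ∂μ := by
  rw [← integral_const_mul]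
  calc ∫ x in s, c * f x ∂μ ≤ ∫ x in s, f x * w x ∂μ :=
        setIntegral_mono_on (hfs.const_mul c) hfw.integrableOn hs fun x hx => by
          rw [mul_comm]; exact mul_le_mul_of_nonneg_left (hcw x hx) (hf x)
    _ ≤ ∫ x, f x * w x ∂μ :=
        setIntegral_le_integral hfw (Eventually.of_forall fun x => mul_nonneg (hf x) (hw x))

theorem prod_erase_range_abs_sub {k i : ℕ} (hi : i ≤ k) :
    ∏ j ∈ (range (k + 1)).erase i, |(i : ℝ) - j| = i ! * (k - i)! := by
  have hsplit : (range (k + 1)).erase i = range i ∪ Ico (i + 1) (k + 1) := by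
    ext j; simp only [mem_erase, mem_range, mem_union, mem_Ico]; omega
  have hdisj : Disjoint (range i) (Ico (i + 1) (k + 1)) := by
    simp only [disjoint_left, mem_range, mem_Ico]; omega
  rw [hsplit, prod_union hdisj, prod_Ico_eq_prod_range, show k + 1 - (i + 1) = k - i by omega,
    ← prod_range_add_one_eq_factorial (k - i), ← prod_range_reflect _ i,
    ← prod_range_add_one_eq_factorial i]
  push_cast
  congr 1 <;> refine prod_congr rfl fun j hj => ?_
  · obtain ⟨m, rfl⟩ := Nat.exists_eq_add_of_lt (mem_range.1 hj)
    rw [show j + m + 1 - 1 - j = m by omega]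
    push_cast
    rw [abs_of_nonneg (by linarith)]
    ring
  · rw [abs_sub_comm, abs_of_nonneg (by linarith)]
    ring

theorem pow_div_factorial_mul_factorial_le {k i : ℕ} (hi : i ≤ k) :
    ((k : ℝ) + 1) ^ k / (i ! * (k - i)!) ≤ (4 * exp 1) ^ k := by
  rcases Nat.eq_zero_or_pos k with rfl | hk
  · simp_all
  have hchoose : (k ! : ℝ) ≤ 2 ^ k * (i ! * (k - i)!) := by
    rw [← Nat.choose_mul_factorial_mul_factorial hi, mul_assoc]
    push_cast
    gcongr
    exact_mod_cast choose_le_two_pow k i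
  have hexp : (k : ℝ) ^ k ≤ exp k * k ! := by
    have := Real.pow_div_factorial_le_exp (k : ℝ) (by positivity) k
    rwa [div_le_iff₀ (by positivity)] at this
  have hk1 : (k : ℝ) + 1 ≤ 2 * k := by
    have : (1 : ℝ) ≤ k := by exact_mod_cast hk
    linarith
  rw [div_le_iff₀ (by positivity)]
  calc ((k : ℝ) + 1) ^ k ≤ 2 ^ k * k ^ k := by rw [← mul_pow]; gcongr
    _ ≤ 2 ^ k * (exp k * k !) := by gcongr
    _ ≤ 2 ^ k * (exp k * (2 ^ k * (i ! * (k - i)!))) := by gcongr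
    _ = (4 * exp 1) ^ k * (i ! * (k - i)!) := by
        rw [← exp_one_pow, mul_pow, show (4 : ℝ) = 2 * 2 by norm_num, mul_pow]; ring

theorem exists_separated_nodes {f : ℝ → ℝ} (hf : Continuous f) (hf0 : 0 ≤ f) {a : ℝ} (ha : 0 < a)
    {n : ℕ} (hn : 0 < n) :
    ∃ v : ℕ → ℝ, (∀ i < n, |v i| ≤ a) ∧
      (∀ i j : ℕ, |(i : ℝ) - j| * (a / n) ≤ |v i - v j|) ∧
      ∀ i < n, f (v i) ≤ n / a * ∫ x in Set.Icc (-a) a, f x := by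
  have hn' : (0 : ℝ) < n := by exact_mod_cast hn
  set L : ℝ := 2 * a / n
  have hL : 0 < L := by positivity
  -- middle halves of the `n` equal subintervals of `[-a, a]`: points chosen in different ones
  -- are at least `L / 2 = a / n` apart
  let I : ℕ → Set ℝ := fun i => Set.Icc (-a + i * L + L / 4) (-a + i * L + 3 * L / 4)
  have hIvol : ∀ i, volume.real (I i) = a / n := fun i => by
    rw [Real.volume_real_Icc_of_le (by linarith)]; simp only [L]; ring
  have hex : ∀ i, ∃ x ∈ I i, f x ≤ ⨍ t in I i, f t := fun i =>
    exists_le_setAverage (by simp [I]; linarith) (by simp [I]) hf.integrableOn_Icc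
  choose v hvI hv using hex
  have hIsub : ∀ i < n, I i ⊆ Set.Icc (-a) a := fun i hi => by
    have hi' : (i : ℝ) + 1 ≤ n := by exact_mod_cast hi
    have hnL : n * L = 2 * a := by simp only [L]; field_simp
    exact Set.Icc_subset_Icc (by nlinarith) (by nlinarith)
  have hsep : ∀ i j : ℕ, i < j → ((j : ℝ) - i) * (a / n) ≤ v j - v i := fun i j hij => by
    have hij' : (i : ℝ) + 1 ≤ j := by exact_mod_cast hij
    have h2 : a / n = L / 2 := by simp only [L]; ring
    rw [h2]
    nlinarith [(hvI i).2, (hvI j).1]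
  refine ⟨v, fun i hi => abs_le.2 (hIsub i hi (hvI i)), fun i j => ?_, fun i hi => ?_⟩
  · rcases lt_trichotomy i j with hij | rfl | hji
    · have : (i : ℝ) < j := by exact_mod_cast hij
      rw [abs_sub_comm, abs_sub_comm (v i), abs_of_pos (by linarith)]
      exact (hsep i j hij).trans (le_abs_self _)
    · simp
    · have : (j : ℝ) < i := by exact_mod_cast hji
      rw [abs_of_pos (by linarith)]
      exact (hsep j i hji).trans (le_abs_self _)
  · have h := hv i
    rw [setAverage_eq, hIvol, smul_eq_mul, inv_div] at h
    refine h.trans (mul_le_mul_of_nonneg_left ?_ (by positivity))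
    exact setIntegral_mono_set hf.integrableOn_Icc (Eventually.of_forall hf0)
      (hIsub i hi).eventuallyLE

theorem eval_eq_sum_eval_mul_lagrange_basis {F : Type*} [Field F] {k : ℕ} {p : Polynomial F}
    (hp : p.natDegree ≤ k) {v : ℕ → F} (hv : Set.InjOn v (range (k + 1))) (y : F) :
    p.eval y = ∑ i ∈ range (k + 1), p.eval (v i) * (Lagrange.basis (range (k + 1)) v i).eval y := by
  conv_lhs => rw [Lagrange.eq_interpolate (f := p) hv (by
    rw [card_range]
    exact Polynomial.degree_le_natDegree.trans_lt (by exact_mod_cast Nat.lt_succ_of_le hp))]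
  simp [Lagrange.interpolate_apply, Polynomial.eval_finsetSum]

theorem abs_eval_lagrange_basis_le {k : ℕ} {v : ℕ → ℝ} {a δ y : ℝ} (hδ : 0 < δ)
    (hv : ∀ j ≤ k, |v j| ≤ a) (hsep : ∀ i j : ℕ, |(i : ℝ) - j| * δ ≤ |v i - v j|)
    (hy : a ≤ |y|) {i : ℕ} (hi : i ≤ k) :
    |(Lagrange.basis (range (k + 1)) v i).eval y| ≤ (2 * |y| / δ) ^ k / (i ! * (k - i)!) := by
  have hfac : ∀ j ∈ (range (k + 1)).erase i,
      |(Lagrange.basisDivisor (v i) (v j)).eval y| ≤ 2 * |y| / δ / |(i : ℝ) - j| := by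
    intro j hj
    obtain ⟨hji, hjk⟩ := mem_erase.1 hj
    have hij : 0 < |(i : ℝ) - j| := abs_pos.2 (sub_ne_zero.2 (by exact_mod_cast hji.symm))
    have hvij : |(i : ℝ) - j| * δ ≤ |v i - v j| := hsep i j
    have hyv : |y - v j| ≤ 2 * |y| := by
      linarith [abs_sub y (v j), hv j (by simpa [Nat.lt_succ_iff] using hjk)]
    simp only [Lagrange.basisDivisor, Polynomial.eval_mul, Polynomial.eval_C, Polynomial.eval_sub,
      Polynomial.eval_X, abs_mul, abs_inv]
    rw [div_div, inv_mul_eq_div, mul_comm δ]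
    exact div_le_div₀ (by positivity) hyv (by positivity) hvij
  rw [Lagrange.basis, Polynomial.eval_prod, abs_prod]
  calc ∏ j ∈ (range (k + 1)).erase i, |(Lagrange.basisDivisor (v i) (v j)).eval y|
      ≤ ∏ j ∈ (range (k + 1)).erase i, (2 * |y| / δ / |(i : ℝ) - j|) :=
        prod_le_prod (fun _ _ => abs_nonneg _) hfac
    _ = (2 * |y| / δ) ^ k / (i ! * (k - i)!) := by
        rw [prod_div_distrib, prod_const, card_erase_of_mem (mem_range.2 (by omega)), card_range,
          prod_erase_range_abs_sub hi, Nat.add_sub_cancel]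

theorem sq_eval_le_of_le_abs {k : ℕ} {p : Polynomial ℝ} (hp : p.natDegree ≤ k) {a y : ℝ}
    (ha : 0 < a) (hy : a ≤ |y|) :
    p.eval y ^ 2 ≤ (k + 1) ^ 3 / a * (64 * exp 1 ^ 2 * y ^ 2 / a ^ 2) ^ k *
      ∫ x in Set.Icc (-a) a, p.eval x ^ 2 := by
  set Q := ∫ x in Set.Icc (-a) a, p.eval x ^ 2
  obtain ⟨v, hva, hsep, hvQ⟩ := exists_separated_nodes (f := fun x => p.eval x ^ 2)
    (p.continuous.pow 2) (fun x => sq_nonneg _) ha k.succ_pos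
  push_cast at hsep hvQ
  have hinj : Set.InjOn v (range (k + 1)) := fun i _ j _ hij => by
    have h := hsep i j
    rw [hij, sub_self, abs_zero] at h
    have : |(i : ℝ) - j| = 0 := by
      nlinarith [abs_nonneg ((i : ℝ) - j), (by positivity : 0 < a / (k + 1))]
    exact_mod_cast sub_eq_zero.1 (abs_eq_zero.1 this)
  set ℓ := fun i => (Lagrange.basis (range (k + 1)) v i).eval y
  set B := (8 * exp 1 * |y| / a) ^ k
  have hℓ : ∀ i ∈ range (k + 1), |ℓ i| ≤ B := by
    intro i hi
    have hik : i ≤ k := Nat.lt_succ_iff.1 (mem_range.1 hi)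
    refine (abs_eval_lagrange_basis_le (by positivity) (fun j hj => hva j (by omega)) hsep hy
      hik).trans ?_
    calc (2 * |y| / (a / (k + 1))) ^ k / (i ! * (k - i)!)
        = (2 * |y| / a) ^ k * (((k : ℝ) + 1) ^ k / (i ! * (k - i)!)) := by
          rw [div_div_eq_mul_div, mul_div_right_comm, mul_pow, mul_div_assoc]
      _ ≤ (2 * |y| / a) ^ k * (4 * exp 1) ^ k := by
          gcongr; exact pow_div_factorial_mul_factorial_le hik
      _ = B := by rw [← mul_pow]; congr 1; ring
  have hterm : ∀ i ∈ range (k + 1), (p.eval (v i) * ℓ i) ^ 2 ≤ (k + 1) / a * Q * B ^ 2 := by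
    intro i hi
    rw [mul_pow, ← sq_abs (ℓ i)]
    exact mul_le_mul (hvQ i (mem_range.1 hi)) (pow_le_pow_left₀ (abs_nonneg _) (hℓ i hi) 2)
      (by positivity) (by positivity)
  have hB : B ^ 2 = (64 * exp 1 ^ 2 * y ^ 2 / a ^ 2) ^ k := by
    rw [← pow_mul, mul_comm k 2, pow_mul, div_pow, mul_pow, mul_pow, sq_abs]; norm_num
  calc p.eval y ^ 2 ≤ (k + 1) * ∑ i ∈ range (k + 1), (p.eval (v i) * ℓ i) ^ 2 := by
        rw [eval_eq_sum_eval_mul_lagrange_basis hp hinj]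
        exact sq_sum_le_card_mul_sum_sq.trans_eq (by simp [ℓ])
    _ ≤ (k + 1) * ((k + 1) * ((k + 1) / a * Q * B ^ 2)) := by
        gcongr; simpa using sum_le_card_nsmul _ _ _ hterm
    _ = (k + 1) ^ 3 / a * (64 * exp 1 ^ 2 * y ^ 2 / a ^ 2) ^ k * Q := by rw [← hB]; ring

theorem exists_pow_mul_exp_le {c : ℝ} (hc : 0 < c) (β : ℝ) :
    ∃ γ : ℝ, 1 ≤ γ ∧ ∀ k : ℕ, 1 ≤ k → ∀ u : ℝ, γ * k ≤ u →
      ((k : ℝ) + 1) ^ 3 * u * (64 * exp 1 ^ 2 * u / k) ^ k * exp (β * k) ≤ exp (c * u) := by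
  set D : ℝ := exp 3 * exp 1 * (64 * exp 1 ^ 2) * exp β
  obtain ⟨γ₀, hγ₀⟩ := eventually_atTop.1 ((isLittleO_pow_exp_pos_mul_atTop 2 hc).bound
    (inv_pos.2 (by positivity : 0 < D)))
  refine ⟨max γ₀ 1, le_max_right _ _, fun k hk u hu => ?_⟩
  have hk0 : (0 : ℝ) < k := by exact_mod_cast hk
  obtain ⟨t, ht, rfl⟩ : ∃ t, max γ₀ 1 ≤ t ∧ u = k * t :=
    ⟨u / k, by rwa [le_div_iff₀ hk0], by field_simp⟩
  have ht1 : 1 ≤ t := (le_max_right _ _).trans ht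
  have hDt : D * t ^ 2 ≤ exp (c * t) := by
    have h := hγ₀ t ((le_max_left _ _).trans ht)
    rw [Real.norm_of_nonneg (by positivity), Real.norm_of_nonneg (exp_pos _).le] at h
    rwa [inv_mul_eq_div, le_div_iff₀' (by positivity)] at h
  -- with `u = k t`, every factor is at most the `k`-th power of a function of `t` alone
  have h3 : ((k : ℝ) + 1) ^ 3 ≤ exp 3 ^ k := by
    calc ((k : ℝ) + 1) ^ 3 ≤ exp k ^ 3 := by gcongr; exact add_one_le_exp _
      _ = exp 3 ^ k := by rw [← exp_nat_mul, ← exp_nat_mul]; ring_nf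
  have hkt : (k : ℝ) * t ≤ (exp 1 * t) ^ k := by
    rw [mul_pow, exp_one_pow]
    exact mul_le_mul ((le_add_of_nonneg_right zero_le_one).trans (add_one_le_exp _))
      (le_self_pow₀ ht1 (by omega)) (by linarith) (exp_pos _).le
  calc ((k : ℝ) + 1) ^ 3 * (k * t) * (64 * exp 1 ^ 2 * (k * t) / k) ^ k * exp (β * k)
      ≤ exp 3 ^ k * (exp 1 * t) ^ k * (64 * exp 1 ^ 2 * t) ^ k * exp β ^ k := by
        rw [mul_div_assoc, mul_div_cancel_left₀ t hk0.ne', mul_comm β, exp_nat_mul]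
        gcongr
    _ = (D * t ^ 2) ^ k := by ring
    _ ≤ exp (c * t) ^ k := by gcongr
    _ = exp (c * (k * t)) := by rw [← exp_nat_mul]; ring_nf

section GaussianWeight

variable {w : ℝ → ℝ} {A K α β γ : ℝ} {k : ℕ} {p : Polynomial ℝ}

theorem sq_mul_sq_mul_le_of_threshold_le (hA : 0 < A) (hK : 0 ≤ K) (hβ : 0 ≤ β)
    (hlow : ∀ y, A * exp (-β * y ^ 2) ≤ w y) (hup : ∀ y, w y ≤ A * K * exp (-α * y ^ 2))
    (hγ : 1 ≤ γ) (hk : 1 ≤ k)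
    (hthr : ∀ u : ℝ, γ * k ≤ u →
      ((k : ℝ) + 1) ^ 3 * u * (64 * exp 1 ^ 2 * u / k) ^ k * exp (β * k) ≤ exp (α / 2 * u))
    (hp : p.natDegree ≤ k) (hpw : Integrable (fun y => p.eval y ^ 2 * w y))
    {y : ℝ} (hy : γ * k ≤ y ^ 2) :
    y ^ 2 * p.eval y ^ 2 * w y ≤ K * (∫ x, p.eval x ^ 2 * w x) * exp (-(α / 2) * y ^ 2) := by
  have hw : 0 ≤ w := fun x => (by positivity : 0 ≤ A * exp (-β * x ^ 2)).trans (hlow x)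
  have hk0 : (0 : ℝ) < k := by exact_mod_cast hk
  set a := √(k : ℝ)
  have ha : 0 < a := Real.sqrt_pos.2 hk0
  have ha1 : 1 ≤ a := Real.one_le_sqrt.2 (by exact_mod_cast hk)
  have ha2 : a ^ 2 = k := Real.sq_sqrt hk0.le
  have hky : (k : ℝ) ≤ y ^ 2 := by nlinarith
  have hya : a ≤ |y| := by rw [← Real.sqrt_sq_eq_abs]; exact Real.sqrt_le_sqrt hky
  set Q := ∫ x in Set.Icc (-a) a, p.eval x ^ 2
  have hQ : A * exp (-(β * k)) * Q ≤ ∫ x, p.eval x ^ 2 * w x := by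
    refine mul_setIntegral_le_integral_mul measurableSet_Icc (fun x => sq_nonneg _) hw
      (fun x hx => (mul_le_mul_of_nonneg_left (exp_le_exp.2 ?_) hA.le).trans (hlow x))
      (p.continuous.pow 2).integrableOn_Icc hpw
    have : x ^ 2 ≤ k := by rw [← ha2]; exact sq_le_sq' hx.1 hx.2
    nlinarith
  have hgrowth := sq_eval_le_of_le_abs hp ha hya
  rw [ha2] at hgrowth
  have hQ0 : 0 ≤ Q := setIntegral_nonneg measurableSet_Icc fun x _ => sq_nonneg _
  calc y ^ 2 * p.eval y ^ 2 * w y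
      ≤ y ^ 2 * (((k : ℝ) + 1) ^ 3 / a * (64 * exp 1 ^ 2 * y ^ 2 / k) ^ k * Q) *
          (A * K * exp (-α * y ^ 2)) :=
        mul_le_mul (mul_le_mul_of_nonneg_left hgrowth (sq_nonneg y)) (hup y) (hw y) (by positivity)
    _ ≤ y ^ 2 * (((k : ℝ) + 1) ^ 3 * (64 * exp 1 ^ 2 * y ^ 2 / k) ^ k * Q) *
          (A * K * exp (-α * y ^ 2)) := by gcongr; exact div_le_self (by positivity) ha1
    _ = (((k : ℝ) + 1) ^ 3 * y ^ 2 * (64 * exp 1 ^ 2 * y ^ 2 / k) ^ k * exp (β * k)) *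
          (A * exp (-(β * k)) * Q) * (K * exp (-α * y ^ 2)) := by
        rw [exp_neg (β * k)]; field_simp
    _ ≤ exp (α / 2 * y ^ 2) * (∫ x, p.eval x ^ 2 * w x) * (K * exp (-α * y ^ 2)) := by
        gcongr; exact hthr _ hy
    _ = K * (∫ x, p.eval x ^ 2 * w x) * exp (-(α / 2) * y ^ 2) := by
        rw [show -(α / 2) * y ^ 2 = α / 2 * y ^ 2 + -α * y ^ 2 by ring, exp_add]; ring

theorem integral_sq_mul_sq_mul_le (hA : 0 < A) (hK : 0 ≤ K) (hα : 0 < α) (hβ : 0 ≤ β)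
    (hlow : ∀ y, A * exp (-β * y ^ 2) ≤ w y) (hup : ∀ y, w y ≤ A * K * exp (-α * y ^ 2))
    (hmom : ∀ j : ℕ, Integrable (fun y => |y| ^ j * w y))
    (hγ : 1 ≤ γ) (hk : 1 ≤ k)
    (hthr : ∀ u : ℝ, γ * k ≤ u →
      ((k : ℝ) + 1) ^ 3 * u * (64 * exp 1 ^ 2 * u / k) ^ k * exp (β * k) ≤ exp (α / 2 * u))
    (hp : p.natDegree ≤ k) :
    ∫ y, y ^ 2 * p.eval y ^ 2 * w y ≤ (γ + K * √(π / (α / 2))) * k * ∫ y, p.eval y ^ 2 * w y := by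
  set J := ∫ y, p.eval y ^ 2 * w y
  have hw : 0 ≤ w := fun x => (by positivity : 0 ≤ A * exp (-β * x ^ 2)).trans (hlow x)
  have hpw : Integrable (fun y => p.eval y ^ 2 * w y) := by
    have h := (p ^ 2).integrable_eval_mul_of_moments hmom
    simp only [Polynomial.eval_pow] at h
    exact h
  have hypw : Integrable (fun y => y ^ 2 * p.eval y ^ 2 * w y) := by
    have h := (Polynomial.X ^ 2 * p ^ 2).integrable_eval_mul_of_moments hmom
    simp only [Polynomial.eval_mul, Polynomial.eval_pow, Polynomial.eval_X] at h
    exact h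
  have hJ : 0 ≤ J := integral_nonneg fun y => mul_nonneg (sq_nonneg _) (hw y)
  have hk1 : (1 : ℝ) ≤ k := by exact_mod_cast hk
  have hpt : ∀ y, y ^ 2 * p.eval y ^ 2 * w y ≤
      γ * k * (p.eval y ^ 2 * w y) + K * J * exp (-(α / 2) * y ^ 2) := fun y => by
    have hpw0 : 0 ≤ p.eval y ^ 2 * w y := mul_nonneg (sq_nonneg _) (hw y)
    by_cases hy : γ * k ≤ y ^ 2
    · have : y ^ 2 * p.eval y ^ 2 * w y ≤ K * J * exp (-(α / 2) * y ^ 2) :=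
        sq_mul_sq_mul_le_of_threshold_le hA hK hβ hlow hup hγ hk hthr hp hpw hy
      linarith [mul_nonneg (mul_nonneg (zero_le_one.trans hγ) k.cast_nonneg) hpw0]
    · have : 0 ≤ K * J * exp (-(α / 2) * y ^ 2) := by positivity
      linarith [mul_le_mul_of_nonneg_right (not_le.1 hy).le hpw0]
  have hgauss := integrable_exp_neg_mul_sq (half_pos hα)
  calc ∫ y, y ^ 2 * p.eval y ^ 2 * w y
      ≤ ∫ y, (γ * k * (p.eval y ^ 2 * w y) + K * J * exp (-(α / 2) * y ^ 2)) :=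
        integral_mono hypw ((hpw.const_mul _).add (hgauss.const_mul _)) hpt
    _ = γ * k * J + K * J * √(π / (α / 2)) := by
        rw [integral_add (hpw.const_mul _) (hgauss.const_mul _), integral_const_mul,
          integral_const_mul, integral_gaussian]
    _ ≤ (γ + K * √(π / (α / 2))) * k * J := by
        nlinarith [mul_nonneg (mul_nonneg hK (Real.sqrt_nonneg (π / (α / 2)))) hJ]

end GaussianWeight

theorem mult_by_y_general_weight (C₁ C₂ : ℝ) (hC₁ : 0 < C₁) (hC₂ : 0 < C₂) :
    ∃ C' : ℝ, 0 < C' ∧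
      ∀ (V : ℝ → ℝ), Differentiable ℝ V → Differentiable ℝ (deriv V) →
        ∀ w : ℝ → ℝ, w = (fun y => Real.exp (-V y)) →
        (∀ j : ℕ, Integrable (fun y => |y| ^ j * w y)) →
        (∀ y, |deriv V y| ≤ C₁ * (1 + |y|)) →
        (∀ y, C₂ ≤ deriv (deriv V) y) →
        ∀ k : ℕ, 1 ≤ k → ∀ p : Polynomial ℝ, p.natDegree ≤ k →
          (∫ y, y ^ 2 * p.eval y ^ 2 * w y) ≤
            C' ^ 2 * (k : ℝ) * ∫ y, p.eval y ^ 2 * w y := by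
  obtain ⟨γ, hγ, hthr⟩ := exists_pow_mul_exp_le (c := C₂ / 4 / 2) (by positivity) (2 * C₁)
  set K := exp (C₁ ^ 2 / C₂ + C₁ / 4)
  refine ⟨√(γ + K * √(π / (C₂ / 4 / 2))), by positivity, ?_⟩
  rintro V hV hV' w rfl hmom hV'b hV'' k hk p hp
  rw [Real.sq_sqrt (by positivity)]
  refine integral_sq_mul_sq_mul_le (A := exp (-V 0 - C₁ / 4)) (exp_pos _) (exp_pos _).le
    (by positivity) (by positivity) (fun y => ?_) (fun y => ?_) hmom hγ hk (hthr k hk) hp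
  · rw [← exp_add]
    exact exp_le_exp.2 (by linarith [le_add_sq_of_abs_deriv_le hV hV'b y])
  · rw [← exp_add, ← exp_add]
    refine exp_le_exp.2 ?_
    linarith [add_sq_le_of_le_deriv2 hC₂ hV hV' hV'' (by simpa using hV'b 0) y]
end
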